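/- Fix ε ∈ (0,1/2) and K > 0. There is a constant C = C(ε, K) such that for all T ≥ 2, all M with T^ε ≤ M ≤ T^{1−ε}, every real N ≥ 2, and all complex numbers a_n supported on the integers n with N < n ≤ 2N: MT · Σ_{1 ≤ q ≤ K·N/T} (1/q) ∫_{−M^ε/M}^{M^ε/M} Σ_{1 ≤ c ≤ K·N/(Tq)} (1/c) Σ_{α mod c, gcd(α,c)=1} |Σ_{N < n ≤ 2N} a_n e(αn/c) e(nt/(cq))|² dt ≤ C · M · N · (TN)^ε · Σ_{N < n ≤ 2N} |a_n|². -/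

import Mathlib

open scoped Classical
open MeasureTheory

/-- `e(x) = exp(2πix)`. -/
noncomputable def e (x : ℝ) : ℂ := Complex.exp (2 * Real.pi * Complex.I * x)

/-!
Write `S(x) = ∑ aₙ e(nx)`. The inner sum at `t` is `S(α/c + t/(cq))`, so after the substitution
`x = α/c + t/(cq)` each `(q, c, α)` term is `cq` times the integral of `|S|²` over an interval
of length `2δ/(cq) ≤ 2/c` around `α/c`, where `δ = M^ε/M ≤ 1`. These intervals for
`α = 0, …, c-1` cover `[-1, 1]` at most twice, and by Parseval `∫_{-1}^{1} |S|² = 2 ∑ |aₙ|²`, so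
the `c`-sum contributes at most `4q ⌊KN/(Tq)⌋ ∑ |aₙ|² ≤ 4 (KN/T) ∑ |aₙ|²`. The remaining
harmonic sum over `q` is `≤ 1 + log((1 + K) N) ≪_{K, ε} (TN)^ε`.
-/

lemma e_add (x y : ℝ) : e (x + y) = e x * e y := by
  rw [e, e, e, ← Complex.exp_add]; push_cast; ring_nf

lemma conj_e (x : ℝ) : starRingEnd ℂ (e x) = e (-x) := by
  rw [e, e, ← Complex.exp_conj]
  simp only [map_mul, Complex.conj_ofReal, Complex.conj_I, map_ofNat]
  push_cast; ring_nf

lemma continuous_e : Continuous e := by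
  unfold e; fun_prop

lemma integral_e_int_mul (k : ℤ) :
    ∫ x in (-1 : ℝ)..1, e (k * x) = if k = 0 then 2 else 0 := by
  split_ifs with hk
  · simp [hk, e]; norm_num
  have hc : 2 * (Real.pi : ℂ) * Complex.I * k ≠ 0 := by
    simp [Real.pi_ne_zero, Complex.I_ne_zero, hk]
  have h1 : Complex.exp (2 * Real.pi * Complex.I * k) = 1 := by
    rw [← Complex.exp_int_mul_two_pi_mul_I k]; ring_nf
  have h2 : Complex.exp (-(2 * Real.pi * Complex.I * k)) = 1 := by
    rw [← Complex.exp_int_mul_two_pi_mul_I (-k)]; push_cast; ring_nf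
  simp only [e, Complex.ofReal_mul, Complex.ofReal_intCast, ← mul_assoc]
  rw [integral_exp_mul_complex hc]
  push_cast
  simp only [mul_one, mul_neg, h1, h2, sub_self, zero_div]

noncomputable def expSumNormSq (F : Finset ℕ) (b : ℕ → ℂ) (x : ℝ) : ℝ :=
  ‖∑ n ∈ F, b n * e (n * x)‖ ^ 2

section expSumNormSq

variable (F : Finset ℕ) (b : ℕ → ℂ)

lemma expSumNormSq_nonneg (x : ℝ) : 0 ≤ expSumNormSq F b x := sq_nonneg _

lemma continuous_expSumNormSq : Continuous (expSumNormSq F b) := by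
  unfold expSumNormSq
  exact (continuous_finsetSum _ fun n _ =>
    continuous_const.mul (continuous_e.comp (by fun_prop))).norm.pow 2

lemma ofReal_expSumNormSq (x : ℝ) :
    (expSumNormSq F b x : ℂ) =
      ∑ n ∈ F, ∑ m ∈ F, b n * starRingEnd ℂ (b m) * e (((n - m : ℤ) : ℝ) * x) := by
  rw [expSumNormSq, Complex.ofReal_pow, ← Complex.mul_conj', map_sum, Finset.sum_mul_sum]
  refine Finset.sum_congr rfl fun n _ => Finset.sum_congr rfl fun m _ => ?_
  rw [map_mul, conj_e, mul_mul_mul_comm, ← e_add]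
  push_cast; ring_nf

lemma integral_expSumNormSq :
    ∫ x in (-1 : ℝ)..1, expSumNormSq F b x = 2 * ∑ n ∈ F, ‖b n‖ ^ 2 := by
  have hint : ∀ n m : ℕ, IntervalIntegrable
      (fun x : ℝ => b n * starRingEnd ℂ (b m) * e (((n - m : ℤ) : ℝ) * x)) volume (-1) 1 :=
    fun n m => (continuous_const.mul (continuous_e.comp (by fun_prop))).intervalIntegrable _ _
  apply Complex.ofReal_injective
  rw [← intervalIntegral.integral_ofReal]
  simp_rw [ofReal_expSumNormSq]
  rw [intervalIntegral.integral_finsetSum fun n _ => by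
    simpa only [Finset.sum_fn] using IntervalIntegrable.sum F fun m _ => hint n m]
  simp_rw [intervalIntegral.integral_finsetSum fun m _ => hint _ m,
    intervalIntegral.integral_const_mul, integral_e_int_mul, sub_eq_zero, Nat.cast_inj,
    mul_ite, mul_zero, Finset.sum_ite_eq, Complex.mul_conj']
  push_cast
  rw [Finset.mul_sum]
  exact Finset.sum_congr rfl fun n hn => by rw [if_pos hn]; ring

end expSumNormSq

section NonnegIntegral

variable {f : ℝ → ℝ}

lemma sum_integral_shifted_le (hf : Continuous f) (hf0 : ∀ x, 0 ≤ f x) {c : ℕ} (hc : 1 ≤ c)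
    {s : ℝ} (hs₁ : -1 ≤ s) (hs₀ : s ≤ 0) :
    ∑ α ∈ Finset.range c, ∫ x in (α + s) / c..(α + 1 + s) / c, f x ≤ ∫ x in (-1 : ℝ)..1, f x := by
  have hc₀ : (0 : ℝ) < c := by exact_mod_cast hc
  have hc₁ : (1 : ℝ) ≤ c := by exact_mod_cast hc
  have htele := intervalIntegral.sum_integral_adjacent_intervals (μ := volume) (f := f)
    (a := fun k : ℕ => (k + s) / c) (n := c) fun k _ => hf.intervalIntegrable _ _
  push_cast at htele
  rw [htele, zero_add]
  refine intervalIntegral.integral_mono_interval ?_ ?_ ?_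
    (Filter.Eventually.of_forall hf0) (hf.intervalIntegrable _ _)
  · rw [le_div_iff₀ hc₀]; linarith
  · gcongr; linarith
  · rw [div_le_one hc₀]; linarith

lemma sum_integral_sub_inv_add_inv_le (hf : Continuous f) (hf0 : ∀ x, 0 ≤ f x) {c : ℕ}
    (hc : 1 ≤ c) :
    ∑ α ∈ Finset.range c, ∫ x in (α / c - (c : ℝ)⁻¹)..(α / c + (c : ℝ)⁻¹), f x ≤
      2 * ∫ x in (-1 : ℝ)..1, f x := by
  have hsplit : ∀ α : ℕ, ∫ x in (α / c - (c : ℝ)⁻¹)..(α / c + (c : ℝ)⁻¹), f x =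
      (∫ x in (α + -1) / c..(α + 1 + -1) / c, f x) + ∫ x in (α + 0) / c..(α + 1 + 0) / c, f x := by
    intro α
    rw [← intervalIntegral.integral_add_adjacent_intervals (b := α / c)
      (hf.intervalIntegrable _ _) (hf.intervalIntegrable _ _)]
    congr 2 <;> ring
  rw [Finset.sum_congr rfl fun α _ => hsplit α, Finset.sum_add_distrib, two_mul]
  exact add_le_add (sum_integral_shifted_le hf hf0 hc le_rfl (by norm_num))
    (sum_integral_shifted_le hf hf0 hc (by norm_num) le_rfl)

lemma integral_comp_add_div_le (hf : Continuous f) (hf0 : ∀ x, 0 ≤ f x) (x₀ : ℝ) {r δ h : ℝ}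
    (hr : 0 < r) (hδ : 0 ≤ δ) (hδh : δ ≤ r * h) :
    ∫ t in -δ..δ, f (x₀ + t / r) ≤ r * ∫ x in (x₀ - h)..(x₀ + h), f x := by
  have hδr : δ / r ≤ h := by rwa [div_le_iff₀' hr]
  rw [intervalIntegral.integral_comp_add_div _ hr.ne', smul_eq_mul]
  gcongr
  refine intervalIntegral.integral_mono_interval ?_ ?_ ?_
    (Filter.Eventually.of_forall hf0) (hf.intervalIntegrable _ _)
  · rw [neg_div]; linarith
  · rw [neg_div]; linarith [div_nonneg hδ hr.le]
  · linarith

end NonnegIntegral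

section CoprimeResidues

variable (F : Finset ℕ) (b : ℕ → ℂ)

lemma sum_range_ite_isUnit_eq (c q : ℕ) (t : ℝ) :
    ∑ α ∈ Finset.range c, (if IsUnit (α : ZMod c) then
        ‖∑ n ∈ F, b n * e ((α : ℝ) * n / c) * e ((n : ℝ) * t / (c * q))‖ ^ 2 else 0) =
      ∑ α ∈ (Finset.range c).filter (fun α : ℕ => IsUnit (α : ZMod c)),
        expSumNormSq F b ((α : ℝ) / c + t / (c * q)) := by
  rw [Finset.sum_filter]
  refine Finset.sum_congr rfl fun α _ => ?_
  congr 1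
  simp only [expSumNormSq, mul_assoc, ← e_add]
  congr 3
  funext n
  congr 2
  ring

lemma sum_integral_expSumNormSq_le {c q : ℕ} (hc : 1 ≤ c) (hq : 1 ≤ q) {δ : ℝ} (hδ₀ : 0 ≤ δ)
    (hδ₁ : δ ≤ 1) :
    ∑ α ∈ Finset.range c, ∫ t in -δ..δ, expSumNormSq F b ((α : ℝ) / c + t / (c * q)) ≤
      4 * (c * q) * ∑ n ∈ F, ‖b n‖ ^ 2 := by
  have hc₀ : (0 : ℝ) < c := by exact_mod_cast hc
  have hq₁ : (1 : ℝ) ≤ q := by exact_mod_cast hq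
  have hδ : δ ≤ c * q * (c : ℝ)⁻¹ := by
    rw [mul_comm (c : ℝ), mul_assoc, mul_inv_cancel₀ hc₀.ne', mul_one]; linarith
  have hf := continuous_expSumNormSq F b
  calc ∑ α ∈ Finset.range c, ∫ t in -δ..δ, expSumNormSq F b ((α : ℝ) / c + t / (c * q))
      ≤ ∑ α ∈ Finset.range c,
          c * q * ∫ x in (α / c - (c : ℝ)⁻¹)..(α / c + (c : ℝ)⁻¹), expSumNormSq F b x :=
        Finset.sum_le_sum fun α _ => integral_comp_add_div_le hf (expSumNormSq_nonneg F b) _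
          (by positivity) hδ₀ hδ
    _ ≤ c * q * (2 * ∫ x in (-1 : ℝ)..1, expSumNormSq F b x) := by
        rw [← Finset.mul_sum]
        gcongr
        exact sum_integral_sub_inv_add_inv_le hf (expSumNormSq_nonneg F b) hc
    _ = 4 * (c * q) * ∑ n ∈ F, ‖b n‖ ^ 2 := by
        rw [integral_expSumNormSq]; ring

lemma integral_sum_coprime_residues_le (L : ℕ) {q : ℕ} (hq : 1 ≤ q) {δ : ℝ} (hδ₀ : 0 ≤ δ)
    (hδ₁ : δ ≤ 1) :
    ∫ t in -δ..δ, ∑ c ∈ Finset.Icc 1 L, (1 / (c : ℝ)) * ∑ α ∈ Finset.range c,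
        (if IsUnit (α : ZMod c) then
          ‖∑ n ∈ F, b n * e ((α : ℝ) * n / c) * e ((n : ℝ) * t / (c * q))‖ ^ 2 else 0) ≤
      4 * (L * q) * ∑ n ∈ F, ‖b n‖ ^ 2 := by
  have hf := continuous_expSumNormSq F b
  have hint : ∀ c α : ℕ, IntervalIntegrable
      (fun t => expSumNormSq F b ((α : ℝ) / c + t / (c * q))) volume (-δ) δ :=
    fun c α => (hf.comp (by fun_prop)).intervalIntegrable _ _
  simp_rw [sum_range_ite_isUnit_eq]
  rw [intervalIntegral.integral_finsetSum fun c _ => by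
    simpa only [Finset.sum_fn] using (IntervalIntegrable.sum _ fun α _ => hint c α).const_mul _]
  calc ∑ c ∈ Finset.Icc 1 L, ∫ t in -δ..δ, (1 / (c : ℝ)) *
          ∑ α ∈ (Finset.range c).filter (fun α : ℕ => IsUnit (α : ZMod c)),
            expSumNormSq F b ((α : ℝ) / c + t / (c * q))
      ≤ ∑ c ∈ Finset.Icc 1 L, (1 / (c : ℝ)) * (4 * (c * q) * ∑ n ∈ F, ‖b n‖ ^ 2) := by
        refine Finset.sum_le_sum fun c hc => ?_
        rw [intervalIntegral.integral_const_mul, intervalIntegral.integral_finsetSum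
          fun α _ => hint c α]
        gcongr
        refine le_trans ?_ (sum_integral_expSumNormSq_le F b (Finset.mem_Icc.mp hc).1 hq hδ₀ hδ₁)
        exact Finset.sum_le_sum_of_subset_of_nonneg (Finset.filter_subset _ _) fun α _ _ =>
          intervalIntegral.integral_nonneg (by linarith) fun t _ => expSumNormSq_nonneg F b _
    _ = 4 * (L * q) * ∑ n ∈ F, ‖b n‖ ^ 2 := by
        have hcancel : ∀ c ∈ Finset.Icc 1 L,
            (1 / (c : ℝ)) * (4 * (c * q) * ∑ n ∈ F, ‖b n‖ ^ 2) = 4 * q * ∑ n ∈ F, ‖b n‖ ^ 2 := by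
          intro c hc
          have : (c : ℝ) ≠ 0 := by have := (Finset.mem_Icc.mp hc).1; positivity
          field_simp
        rw [Finset.sum_congr rfl hcancel, Finset.sum_const, Nat.card_Icc, nsmul_eq_mul]
        push_cast; ring

lemma sum_one_div_mul_integral_sum_coprime_residues_le (Q : ℕ) (L : ℕ → ℕ) {x : ℝ}
    (hL : ∀ q : ℕ, (L q : ℝ) * q ≤ x) {δ : ℝ} (hδ₀ : 0 ≤ δ) (hδ₁ : δ ≤ 1) :
    ∑ q ∈ Finset.Icc 1 Q, (1 / (q : ℝ)) *
        ∫ t in -δ..δ, ∑ c ∈ Finset.Icc 1 (L q), (1 / (c : ℝ)) * ∑ α ∈ Finset.range c,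
          (if IsUnit (α : ZMod c) then
            ‖∑ n ∈ F, b n * e ((α : ℝ) * n / c) * e ((n : ℝ) * t / (c * q))‖ ^ 2 else 0) ≤
      4 * x * (∑ n ∈ F, ‖b n‖ ^ 2) * ∑ q ∈ Finset.Icc 1 Q, 1 / (q : ℝ) := by
  rw [Finset.mul_sum]
  refine Finset.sum_le_sum fun q hq => ?_
  rw [mul_comm]
  gcongr
  refine (integral_sum_coprime_residues_le F b _ (Finset.mem_Icc.mp hq).1 hδ₀ hδ₁).trans ?_
  gcongr
  exact hL q

end CoprimeResidues

lemma sum_Icc_floor_one_div_le_one_add_log (x : ℝ) {y : ℝ} (hy : 1 ≤ y) (hxy : x ≤ y) :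
    ∑ q ∈ Finset.Icc 1 ⌊x⌋₊, 1 / (q : ℝ) ≤ 1 + Real.log y := by
  have hfloor : (0 : ℝ) < ⌊y⌋₊ := by exact_mod_cast Nat.floor_pos.mpr hy
  calc ∑ q ∈ Finset.Icc 1 ⌊x⌋₊, 1 / (q : ℝ)
      ≤ ∑ q ∈ Finset.Icc 1 ⌊y⌋₊, 1 / (q : ℝ) :=
        Finset.sum_le_sum_of_subset_of_nonneg (Finset.Icc_subset_Icc le_rfl (Nat.floor_mono hxy))
          fun q _ _ => by positivity
    _ = harmonic ⌊y⌋₊ := by rw [harmonic_eq_sum_Icc]; push_cast; simp only [one_div]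
    _ ≤ 1 + Real.log ⌊y⌋₊ := harmonic_le_one_add_log _
    _ ≤ 1 + Real.log y := by gcongr; exact Nat.floor_le (by linarith)

lemma sum_Icc_floor_one_div_le_mul_rpow {K T N ε : ℝ} (hK : 0 ≤ K) (hT : 1 ≤ T) (hN : 1 ≤ N)
    (hε : 0 < ε) :
    ∑ q ∈ Finset.Icc 1 ⌊K * N / T⌋₊, 1 / (q : ℝ) ≤
      (1 + Real.log (1 + K) + 1 / ε) * (T * N) ^ ε := by
  have hTN : 1 ≤ (T * N) ^ ε := Real.one_le_rpow (by nlinarith) hε.le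
  have hlogN : Real.log N ≤ (T * N) ^ ε / ε :=
    (Real.log_le_rpow_div (by linarith) hε).trans (by gcongr; nlinarith)
  have hlogK : 0 ≤ Real.log (1 + K) := Real.log_nonneg (by linarith)
  have hxy : K * N / T ≤ (1 + K) * N :=
    (div_le_self (by positivity) hT).trans (by nlinarith)
  calc ∑ q ∈ Finset.Icc 1 ⌊K * N / T⌋₊, 1 / (q : ℝ)
      ≤ 1 + (Real.log (1 + K) + Real.log N) := by
        rw [← Real.log_mul (by linarith) (by linarith)]
        exact sum_Icc_floor_one_div_le_one_add_log _ (by nlinarith) hxy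
    _ ≤ (1 + Real.log (1 + K)) * (T * N) ^ ε + (T * N) ^ ε / ε := by nlinarith
    _ = (1 + Real.log (1 + K) + 1 / ε) * (T * N) ^ ε := by ring

/-- Bound for the off-diagonal large-sieve expression: for `T^ε ≤ M ≤ T^{1-ε}` and
complex `a_n` supported on `N < n ≤ 2N`,
`MT ∑_{q ≤ KN/T} (1/q) ∫_{-M^ε/M}^{M^ε/M} ∑_{c ≤ KN/(Tq)} (1/c) ∑*_{α mod c}
  |∑_n a_n e(αn/c) e(nt/(cq))|² dt ≤ C M N (TN)^ε ∑ |a_n|²`. -/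
theorem offdiagonal_large_sieve_bound (ε : ℝ) (hε : ε ∈ Set.Ioo (0 : ℝ) (1 / 2))
    (K : ℝ) (hK : 0 < K) :
    ∃ C : ℝ, ∀ T M : ℝ, 2 ≤ T → T ^ ε ≤ M → M ≤ T ^ (1 - ε) →
      ∀ N : ℝ, 2 ≤ N → ∀ a : ℕ → ℂ,
      (∀ n : ℕ, a n ≠ 0 → (N < n ∧ (n : ℝ) ≤ 2 * N)) →
      (M * T * ∑ q ∈ Finset.Icc 1 ⌊K * N / T⌋₊, (1 / (q : ℝ)) *
          ∫ t in (-(M ^ ε / M))..(M ^ ε / M),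
            ∑ c ∈ Finset.Icc 1 ⌊K * N / (T * q)⌋₊, (1 / (c : ℝ)) *
              ∑ α ∈ Finset.range c,
                if IsUnit (α : ZMod c) then
                  ‖∑ n ∈ Finset.Ioc ⌊N⌋₊ ⌊2 * N⌋₊,
                    a n * e ((α : ℝ) * n / c) * e ((n : ℝ) * t / (c * q))‖ ^ 2
                else 0)
        ≤ C * M * N * (T * N) ^ ε * ∑ n ∈ Finset.Ioc ⌊N⌋₊ ⌊2 * N⌋₊, ‖a n‖ ^ 2 := by
  obtain ⟨hε₀, hε₁⟩ := hε
  refine ⟨4 * K * (1 + Real.log (1 + K) + 1 / ε), fun T M hT hTM _ N hN a _ => ?_⟩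
  have hM : 1 ≤ M := (Real.one_le_rpow (by linarith) hε₀.le).trans hTM
  have hδ : M ^ ε / M ≤ 1 :=
    div_le_one_of_le₀ (Real.rpow_le_self_of_one_le hM (by linarith)) (by linarith)
  have hL : ∀ q : ℕ, (⌊K * N / (T * q)⌋₊ : ℝ) * q ≤ K * N / T := fun q => by
    rcases q.eq_zero_or_pos with rfl | hq
    · simp only [CharP.cast_eq_zero, mul_zero]; positivity
    · calc _ ≤ K * N / (T * q) * q := by gcongr; exact Nat.floor_le (by positivity)
        _ = K * N / T := by field_simp
  calc _ ≤ M * T * (4 * (K * N / T) * (∑ n ∈ Finset.Ioc ⌊N⌋₊ ⌊2 * N⌋₊, ‖a n‖ ^ 2) *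
          ∑ q ∈ Finset.Icc 1 ⌊K * N / T⌋₊, 1 / (q : ℝ)) := by
        gcongr
        exact sum_one_div_mul_integral_sum_coprime_residues_le _ a _ _ hL (by positivity) hδ
    _ ≤ M * T * (4 * (K * N / T) * (∑ n ∈ Finset.Ioc ⌊N⌋₊ ⌊2 * N⌋₊, ‖a n‖ ^ 2) *
          ((1 + Real.log (1 + K) + 1 / ε) * (T * N) ^ ε)) := by
        gcongr
        exact sum_Icc_floor_one_div_le_mul_rpow hK.le (by linarith) (by linarith) hε₀
    _ = _ := by field_simp
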